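/- arXiv:2211.04202 — 4 statements merged into one kernel-verified Lean document; each statement's English description precedes it below -/
import Mathlib

section
/- Let a, b, c > 0 and α, β, γ > 1. Then there exists δ > 0 such that there is no point (x₁, x₂, x₃) ∈ (0, δ)³ satisfying simultaneously a·x₂ < x₁^α, b·x₃ < x₂^β, and c·x₁ < x₃^γ. (Three cyclically arranged thin cusps in ℝ³ have empty common intersection near the origin.) -/
/-!
Below the threshold `a ^ (α - 1)⁻¹` the curve `x ↦ x ^ α` lies under the line `x ↦ a * x`, so
`a * y < x ^ α` forces `y < x`. Inside a cube below all three thresholds the cusp inequalities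
therefore give `x₂ < x₁`, `x₃ < x₂` and `x₁ < x₃`, which is absurd.
-/

namespace Real

lemma rpow_lt_mul_self_of_lt_rpow_inv {a α x : ℝ} (ha : 0 < a) (hα : 1 < α) (hx : 0 < x)
    (hxa : x < a ^ (α - 1)⁻¹) : x ^ α < a * x := by
  have hpow : x ^ (α - 1) < a :=
    (lt_rpow_inv_iff_of_pos hx.le ha.le (sub_pos.mpr hα)).mp hxa
  calc x ^ α = x ^ (α - 1) * x := by rw [rpow_sub_one hx.ne', div_mul_cancel₀ _ hx.ne']
    _ < a * x := mul_lt_mul_of_pos_right hpow hx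

lemma lt_of_mul_lt_rpow {a α x y : ℝ} (ha : 0 < a) (hα : 1 < α) (hx : 0 < x)
    (hxa : x < a ^ (α - 1)⁻¹) (h : a * y < x ^ α) : y < x :=
  lt_of_mul_lt_mul_left (h.trans (rpow_lt_mul_self_of_lt_rpow_inv ha hα hx hxa)) ha.le

end Real

theorem stmt_4 (a b c α β γ : ℝ) (ha : 0 < a) (hb : 0 < b) (hc : 0 < c)
    (hα : 1 < α) (hβ : 1 < β) (hγ : 1 < γ) :
    ∃ δ > 0, ¬ ∃ x₁ x₂ x₃ : ℝ,
      (0 < x₁ ∧ x₁ < δ) ∧ (0 < x₂ ∧ x₂ < δ) ∧ (0 < x₃ ∧ x₃ < δ) ∧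
      a * x₂ < x₁ ^ α ∧ b * x₃ < x₂ ^ β ∧ c * x₁ < x₃ ^ γ := by
  refine ⟨min (min (a ^ (α - 1)⁻¹) (b ^ (β - 1)⁻¹)) (c ^ (γ - 1)⁻¹), by positivity, ?_⟩
  rintro ⟨x₁, x₂, x₃, ⟨hx₁, hx₁δ⟩, ⟨hx₂, hx₂δ⟩, ⟨hx₃, hx₃δ⟩, h₁, h₂, h₃⟩
  simp only [lt_min_iff] at hx₁δ hx₂δ hx₃δ
  have h₂₁ := Real.lt_of_mul_lt_rpow ha hα hx₁ hx₁δ.1.1 h₁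
  have h₃₂ := Real.lt_of_mul_lt_rpow hb hβ hx₂ hx₂δ.1.2 h₂
  have h₁₃ := Real.lt_of_mul_lt_rpow hc hγ hx₃ hx₃δ.2 h₃
  linarith
end

section
/- Let a, b, c > 0 and α, β, γ > 1 with β < α·γ. Then there exists δ > 0 such that no point (x₁, x₂, x₃) ∈ (0, δ)³ satisfies simultaneously a·x₂ < x₁^α, b·x₂ > x₃^β, and c·x₁ < x₃^γ. -/
/-!
Raising `c x₁ < x₃ ^ γ` to the power `α` and chaining it with the two other inequalities through
`x₂` gives `x₃ ^ β < (b / (a c ^ α)) x₃ ^ (α γ)`, i.e. `a c ^ α / b < x₃ ^ (α γ - β)`. Since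
`α γ - β > 0`, the right-hand side tends to `0` with `x₃`, so no such point lies close to the origin.
-/

open Real

lemma mul_rpow_lt_rpow_mul_of_mul_lt {c x y α γ : ℝ} (hc : 0 < c) (hx : 0 < x) (hy : 0 < y)
    (hα : 0 < α) (h : c * x < y ^ γ) : c ^ α * x ^ α < y ^ (α * γ) := by
  rw [← mul_rpow hc.le hx.le, mul_comm α γ, rpow_mul hy.le]
  exact rpow_lt_rpow (by positivity) h hα

lemma lt_mul_rpow_sub_of_cusps {a b c α β γ x₁ x₂ x₃ : ℝ} (ha : 0 < a) (hb : 0 < b) (hc : 0 < c)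
    (hα : 0 < α) (hx₁ : 0 < x₁) (hx₃ : 0 < x₃)
    (h₁ : a * x₂ < x₁ ^ α) (h₂ : x₃ ^ β < b * x₂) (h₃ : c * x₁ < x₃ ^ γ) :
    a * c ^ α < b * x₃ ^ (α * γ - β) := by
  have hcα : 0 < c ^ α := rpow_pos_of_pos hc α
  have hx₃β : 0 < x₃ ^ β := rpow_pos_of_pos hx₃ β
  have hx₂ : c ^ α * (a * x₂) < x₃ ^ (α * γ) :=
    (mul_lt_mul_of_pos_left h₁ hcα).trans (mul_rpow_lt_rpow_mul_of_mul_lt hc hx₁ hx₃ hα h₃)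
  have hsplit : x₃ ^ (α * γ) = x₃ ^ (α * γ - β) * x₃ ^ β := by
    rw [← rpow_add hx₃, sub_add_cancel]
  have key : a * c ^ α * x₃ ^ β < b * x₃ ^ (α * γ - β) * x₃ ^ β :=
    calc a * c ^ α * x₃ ^ β < a * c ^ α * (b * x₂) := mul_lt_mul_of_pos_left h₂ (by positivity)
      _ = b * (c ^ α * (a * x₂)) := by ring
      _ < b * x₃ ^ (α * γ) := mul_lt_mul_of_pos_left hx₂ hb
      _ = b * x₃ ^ (α * γ - β) * x₃ ^ β := by rw [hsplit, mul_assoc]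
  exact lt_of_mul_lt_mul_right key hx₃β.le

theorem stmt_5_general (a b c α β γ : ℝ) (ha : 0 < a) (hb : 0 < b) (hc : 0 < c)
    (hα : 1 < α) (h : β < α * γ) :
    ∃ δ > 0, ¬ ∃ x₁ x₂ x₃ : ℝ,
      (0 < x₁ ∧ x₁ < δ) ∧ (0 < x₂ ∧ x₂ < δ) ∧ (0 < x₃ ∧ x₃ < δ) ∧
      a * x₂ < x₁ ^ α ∧ b * x₂ > x₃ ^ β ∧ c * x₁ < x₃ ^ γ := by
  have he : 0 < α * γ - β := sub_pos.2 h
  have hK : 0 < a * c ^ α / b := by positivity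
  refine ⟨(a * c ^ α / b) ^ (α * γ - β)⁻¹, by positivity, ?_⟩
  rintro ⟨x₁, x₂, x₃, ⟨hx₁, -⟩, -, ⟨hx₃, hx₃δ⟩, h₁, h₂, h₃⟩
  have hlower := lt_mul_rpow_sub_of_cusps ha hb hc (by linarith) hx₁ hx₃ h₁ h₂ h₃
  have hupper := (lt_rpow_inv_iff_of_pos hx₃.le hK.le he).1 hx₃δ
  rw [lt_div_iff₀ hb, mul_comm] at hupper
  exact hlower.not_gt hupper

theorem stmt_5 (a b c α β γ : ℝ) (ha : 0 < a) (hb : 0 < b) (hc : 0 < c)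
    (hα : 1 < α) (hβ : 1 < β) (hγ : 1 < γ) (h : β < α * γ) :
    ∃ δ > 0, ¬ ∃ x₁ x₂ x₃ : ℝ,
      (0 < x₁ ∧ x₁ < δ) ∧ (0 < x₂ ∧ x₂ < δ) ∧ (0 < x₃ ∧ x₃ < δ) ∧
      a * x₂ < x₁ ^ α ∧ b * x₂ > x₃ ^ β ∧ c * x₁ < x₃ ^ γ :=
  stmt_5_general a b c α β γ ha hb hc hα h
end

section
/- Let a, b, c > 0 and α, β, γ > 1 with β ≠ α·γ. Then there exists δ > 0 such that the three hypersurfaces a·x₂ = x₁^α, b·x₂ = x₃^β, c·x₁ = x₃^γ in the positive octant of ℝ³ determine (by choosing thin or thick side of each) at least one triple of cusps whose common intersection with (0, δ)³ is empty. -/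
/-!
Chaining the first and third cusp conditions on the same side eliminates `x₁`: for thin cusps
`a·c^α·x₂ < x₃^(αγ)`, for thick ones the reverse. Taking the second cusp on the opposite side then
traps `x₃^β` and `x₃^(αγ)` within constant multiples of each other, which is impossible for small
`x₃` since the exponents differ.
-/

open Real Filter Topology Set

lemma eventually_mul_rpow_lt_mul_rpow_nhdsGT_zero {p q : ℝ} (hpq : p < q) (K : ℝ) {L : ℝ}
    (hL : 0 < L) : ∀ᶠ x in 𝓝[>] 0, K * x ^ q < L * x ^ p := by
  have hlim : Tendsto (fun x : ℝ ↦ K * x ^ (q - p)) (𝓝[>] 0) (𝓝 0) := by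
    have h := (continuousAt_rpow_const 0 (q - p) (Or.inr (sub_pos.2 hpq).le)).tendsto
    rw [zero_rpow (sub_pos.2 hpq).ne'] at h
    simpa using (h.mono_left nhdsWithin_le_nhds).const_mul K
  filter_upwards [hlim.eventually (gt_mem_nhds hL), self_mem_nhdsWithin] with x hKx (hx : 0 < x)
  calc K * x ^ q = K * x ^ (q - p) * x ^ p := by
        rw [mul_assoc, ← rpow_add hx, sub_add_cancel]
    _ < L * x ^ p := by gcongr

lemma exists_pos_forall_mul_rpow_lt_mul_rpow {p q : ℝ} (hpq : p < q) (K : ℝ) {L : ℝ}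
    (hL : 0 < L) : ∃ δ > 0, ∀ x ∈ Ioo 0 δ, K * x ^ q < L * x ^ p :=
  (nhdsGT_basis 0).eventually_iff.1 (eventually_mul_rpow_lt_mul_rpow_nhdsGT_zero hpq K hL)

section Cusps

variable {a c α x₁ x₂ y : ℝ}

lemma mul_rpow_mul_lt_rpow_of_lt_of_lt (hα : 0 < α) (hc : 0 < c) (hx₁ : 0 < x₁)
    (h₁ : a * x₂ < x₁ ^ α) (h₂ : c * x₁ < y) : a * c ^ α * x₂ < y ^ α :=
  calc a * c ^ α * x₂ = c ^ α * (a * x₂) := by ring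
    _ < c ^ α * x₁ ^ α := by gcongr
    _ = (c * x₁) ^ α := (mul_rpow hc.le hx₁.le).symm
    _ < y ^ α := by gcongr

lemma rpow_lt_mul_rpow_mul_of_lt_of_lt (hα : 0 < α) (hc : 0 < c) (hx₁ : 0 < x₁) (hy : 0 ≤ y)
    (h₁ : x₁ ^ α < a * x₂) (h₂ : y < c * x₁) : y ^ α < a * c ^ α * x₂ :=
  calc y ^ α < (c * x₁) ^ α := by gcongr
    _ = c ^ α * x₁ ^ α := mul_rpow hc.le hx₁.le
    _ < c ^ α * (a * x₂) := by gcongr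
    _ = a * c ^ α * x₂ := by ring

end Cusps

theorem stmt_13_general (a b c α β γ : ℝ) (ha : 0 < a) (hb : 0 < b) (hc : 0 < c)
    (hα : 1 < α) (h : β ≠ α * γ) :
    ∃ (s₁ s₂ s₃ : Bool), ∃ δ > 0, ¬ ∃ x₁ x₂ x₃ : ℝ,
      (0 < x₁ ∧ x₁ < δ) ∧ (0 < x₂ ∧ x₂ < δ) ∧ (0 < x₃ ∧ x₃ < δ) ∧
      (if s₁ then a * x₂ < x₁ ^ α else a * x₂ > x₁ ^ α) ∧
      (if s₂ then b * x₂ < x₃ ^ β else b * x₂ > x₃ ^ β) ∧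
      (if s₃ then c * x₁ < x₃ ^ γ else c * x₁ > x₃ ^ γ) := by
  have hα₀ : 0 < α := one_pos.trans hα
  set A := a * c ^ α
  have hA : 0 < A := by positivity
  have hcomp (x : ℝ) (hx : 0 < x) : (x ^ γ) ^ α = x ^ (α * γ) := by
    rw [← rpow_mul hx.le, mul_comm]
  rcases h.lt_or_gt with hlt | hgt
  · obtain ⟨δ, hδ, hsmall⟩ := exists_pos_forall_mul_rpow_lt_mul_rpow hlt b hA
    refine ⟨true, false, true, δ, hδ, ?_⟩
    rintro ⟨x₁, x₂, x₃, ⟨hx₁, -⟩, -, hx₃, h₁, h₂, h₃⟩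
    simp only [if_true, if_false, Bool.false_eq_true] at h₁ h₂ h₃
    have h₁₃ := mul_rpow_mul_lt_rpow_of_lt_of_lt hα₀ hc hx₁ h₁ h₃
    rw [hcomp x₃ hx₃.1] at h₁₃
    have := calc b * x₃ ^ (α * γ) < A * x₃ ^ β := hsmall x₃ hx₃
      _ < A * (b * x₂) := by gcongr
      _ = b * (A * x₂) := by ring
      _ < b * x₃ ^ (α * γ) := by gcongr
    exact this.false
  · obtain ⟨δ, hδ, hsmall⟩ := exists_pos_forall_mul_rpow_lt_mul_rpow hgt A hb
    refine ⟨false, true, false, δ, hδ, ?_⟩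
    rintro ⟨x₁, x₂, x₃, ⟨hx₁, -⟩, -, hx₃, h₁, h₂, h₃⟩
    simp only [if_true, if_false, Bool.false_eq_true] at h₁ h₂ h₃
    have h₁₃ := rpow_lt_mul_rpow_mul_of_lt_of_lt hα₀ hc hx₁ (rpow_nonneg hx₃.1.le γ) h₁ h₃
    rw [hcomp x₃ hx₃.1] at h₁₃
    have := calc A * x₃ ^ β < b * x₃ ^ (α * γ) := hsmall x₃ hx₃
      _ < b * (A * x₂) := by gcongr
      _ = A * (b * x₂) := by ring
      _ < A * x₃ ^ β := by gcongr
    exact this.false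

theorem stmt_13 (a b c α β γ : ℝ) (ha : 0 < a) (hb : 0 < b) (hc : 0 < c)
    (hα : 1 < α) (hβ : 1 < β) (hγ : 1 < γ) (h : β ≠ α * γ) :
    ∃ (s₁ s₂ s₃ : Bool), ∃ δ > 0, ¬ ∃ x₁ x₂ x₃ : ℝ,
      (0 < x₁ ∧ x₁ < δ) ∧ (0 < x₂ ∧ x₂ < δ) ∧ (0 < x₃ ∧ x₃ < δ) ∧
      (if s₁ then a * x₂ < x₁ ^ α else a * x₂ > x₁ ^ α) ∧
      (if s₂ then b * x₂ < x₃ ^ β else b * x₂ > x₃ ^ β) ∧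
      (if s₃ then c * x₁ < x₃ ^ γ else c * x₁ > x₃ ^ γ) :=
  stmt_13_general a b c α β γ ha hb hc hα h
end

section
/- Let N ≥ 2 and suppose in ℝ^N we are given 2N pairs of cusps (each pair determined by a hypersurface a_m·x_{i_m} = x_{j_m}^{α_m} with i_m ≠ j_m, a_m > 0, α_m > 1, m = 1, …, 2N). Then, near the origin, these 2N pairs do not intersect all-to-all; in fact already among any N of them some choice of one cusp from each pair has empty common intersection in a sufficiently small neighbourhood of the origin (given the genericity condition that no exponent product relations create coinciding boundary curves). -/
/-!
In logarithmic coordinates `y = log x`, which are all very negative near the origin, each pair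
of cusps is an edge `m` between the coordinates `i m` and `j m`, and choosing one cusp of the
pair imposes `y_w ≤ β y_u + γ` or `y_w ≥ β y_u + γ` when the edge is traversed from `u` to `w`,
with `β = α_m` or `α_m⁻¹` according to the direction of traversal. `N` edges on `N` vertices
contain a closed trail. Composing the bounds around it yields `y_0 ≤ B y_0 + C` (or `≥`), where
`B` is a product of `α_m^{±1}` over distinct edges, hence `B ≠ 1` by genericity. Choosing the
cusps so that all inequalities point in the direction of the sign of `B - 1` bounds `y_0` from
below, which fails close enough to the origin.
-/

open Finset Real

section Trails

variable {ι V : Type*}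

def Joins (i j : ι → V) (m : ι) (u w : V) : Prop :=
  (i m = u ∧ j m = w) ∨ (j m = u ∧ i m = w)

structure ClosedTrail (i j : ι → V) where
  length : ℕ
  vertex : ℕ → V
  edge : ℕ → ι
  length_pos : 0 < length
  joins : ∀ t < length, Joins i j (edge t) (vertex t) (vertex (t + 1))
  vertex_length : vertex length = vertex 0
  injOn_edge : Set.InjOn edge (range length)

variable {i j : ι → V}

lemma Joins.eq_of_ne {m : ι} {u w u' w' : V} (h : Joins i j m u w) (h' : Joins i j m u' w')
    (hu : u ≠ u') : u' = w := by
  unfold Joins at h h'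
  grind

lemma Joins.left_mem {m : ι} {u w : V} (h : Joins i j m u w) : i m = u ∨ j m = u := by
  unfold Joins at h
  tauto

lemma Joins.right_eq_of_left {m : ι} {u w : V}
    (h : Joins i j m u w) (hj : j m = u) : i m = w := by
  unfold Joins at h
  grind

lemma Joins.eq_of_not_left {m : ι} {u w : V}
    (h : Joins i j m u w) (hj : j m ≠ u) : i m = u ∧ j m = w := by
  unfold Joins at h
  tauto

lemma exists_nonbacktracking_walk {E : Finset ι} {m₀ : ι} (hm₀ : m₀ ∈ E)
    (hext : ∀ m ∈ E, ∀ v, (i m = v ∨ j m = v) → ∃ m' ∈ E, m' ≠ m ∧ (i m' = v ∨ j m' = v)) :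
    ∃ (v : ℕ → V) (e : ℕ → ι),
      ∀ t, e t ∈ E ∧ Joins i j (e t) (v t) (v (t + 1)) ∧ e (t + 1) ≠ e t := by
  classical
  have hnext : ∀ p : V × ι, ∃ q : V × ι, p.2 ∈ E → (i p.2 = p.1 ∨ j p.2 = p.1) →
      q.2 ∈ E ∧ (i q.2 = q.1 ∨ j q.2 = q.1) ∧ Joins i j p.2 p.1 q.1 ∧ q.2 ≠ p.2 := by
    rintro ⟨u, m⟩
    by_cases hm : m ∈ E ∧ (i m = u ∨ j m = u)
    · set w := if i m = u then j m else i m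
      have hjoin : Joins i j m u w := by unfold Joins w; grind
      obtain ⟨m', hm'E, hm'm, hm'w⟩ := hext m hm.1 w (by grind)
      exact ⟨(w, m'), fun _ _ => ⟨hm'E, hm'w, hjoin, hm'm⟩⟩
    · exact ⟨(u, m), fun h h' => absurd ⟨h, h'⟩ hm⟩
  choose next hnext using hnext
  set walk : ℕ → V × ι := fun t => next^[t] (i m₀, m₀)
  have hwalk_succ (t : ℕ) : walk (t + 1) = next (walk t) := Function.iterate_succ_apply' ..
  have hinv : ∀ t, (walk t).2 ∈ E ∧ (i (walk t).2 = (walk t).1 ∨ j (walk t).2 = (walk t).1) := by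
    intro t
    induction t with
    | zero => exact ⟨hm₀, Or.inl rfl⟩
    | succ t ih =>
      rw [hwalk_succ]
      exact ⟨(hnext _ ih.1 ih.2).1, (hnext _ ih.1 ih.2).2.1⟩
  refine ⟨fun t => (walk t).1, fun t => (walk t).2, fun t => ?_⟩
  simp only [hwalk_succ]
  exact ⟨(hinv t).1, (hnext _ (hinv t).1 (hinv t).2).2.2⟩

lemma exists_closedTrail_of_walk {v : ℕ → V} {e : ℕ → ι} (hfin : (Set.range v).Finite)
    (hjoin : ∀ t, Joins i j (e t) (v t) (v (t + 1))) (hback : ∀ t, e (t + 1) ≠ e t) :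
    ∃ c : ClosedTrail i j, ∀ t < c.length, c.edge t ∈ Set.range e := by
  classical
  have hrep : ∃ b, ∃ a < b, v a = v b := by
    obtain ⟨a, b, hab, h⟩ := hfin.exists_lt_map_eq_of_forall_mem (f := v) Set.mem_range_self
    exact ⟨b, a, hab, h⟩
  obtain ⟨a, hab, hvab⟩ := Nat.find_spec hrep
  set b := Nat.find hrep
  have hvinj : ∀ s t, s < t → t < b → v s ≠ v t := fun s t hst htb h =>
    Nat.find_min hrep htb ⟨s, hst, h⟩
  -- a repeated edge before `b` would force a repeated vertex before `b`
  have heinj : ∀ s t, s < t → t < b → e s ≠ e t := by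
    intro s t hst htb h
    rcases (Nat.succ_le_of_lt hst).eq_or_lt with hts | hts
    · subst hts
      exact hback s h.symm
    · exact hvinj (s + 1) t hts htb
        ((hjoin s).eq_of_ne (h ▸ hjoin t) (hvinj s t hst htb)).symm
  refine ⟨⟨b - a, fun t => v (a + t), fun t => e (a + t), by omega, fun t _ => hjoin (a + t),
    by simp only [Nat.add_sub_cancel' hab.le, add_zero, hvab], ?_⟩, fun t _ => ⟨a + t, rfl⟩⟩
  intro s hs t ht h
  simp only [coe_range, Set.mem_Iio] at hs ht
  by_contra hne
  rcases lt_or_gt_of_ne hne with hlt | hlt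
  · exact heinj (a + s) (a + t) (by omega) (by omega) h
  · exact heinj (a + t) (a + s) (by omega) (by omega) h.symm

lemma exists_closedTrail_of_forall_extend {E : Finset ι} (hE : E.Nonempty)
    (hext : ∀ m ∈ E, ∀ v, (i m = v ∨ j m = v) → ∃ m' ∈ E, m' ≠ m ∧ (i m' = v ∨ j m' = v)) :
    ∃ c : ClosedTrail i j, ∀ t < c.length, c.edge t ∈ E := by
  classical
  obtain ⟨m₀, hm₀⟩ := hE
  obtain ⟨v, e, hwalk⟩ := exists_nonbacktracking_walk hm₀ hext
  have hfin : (Set.range v).Finite := by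
    refine (E.image i ∪ E.image j).finite_toSet.subset ?_
    rintro _ ⟨t, rfl⟩
    rcases (hwalk t).2.1.left_mem with h | h
    · exact mem_union_left _ (mem_image.mpr ⟨_, (hwalk t).1, h⟩)
    · exact mem_union_right _ (mem_image.mpr ⟨_, (hwalk t).1, h⟩)
  obtain ⟨c, hc⟩ :=
    exists_closedTrail_of_walk hfin (fun t => (hwalk t).2.1) (fun t => (hwalk t).2.2)
  refine ⟨c, fun t ht => ?_⟩
  obtain ⟨s, hs⟩ := hc t ht
  exact hs ▸ (hwalk s).1

theorem exists_closedTrail_of_card_le (hij : ∀ m, i m ≠ j m) (V₀ : Finset V)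
    (E : Finset ι) (hEV : ∀ m ∈ E, i m ∈ V₀ ∧ j m ∈ V₀) (hcard : #V₀ ≤ #E) (hE : E.Nonempty) :
    ∃ c : ClosedTrail i j, ∀ t < c.length, c.edge t ∈ E := by
  classical
  induction V₀ using Finset.strongInduction generalizing E with
  | H V₀ ih =>
  by_cases hext : ∀ m ∈ E, ∀ v, (i m = v ∨ j m = v) → ∃ m' ∈ E, m' ≠ m ∧ (i m' = v ∨ j m' = v)
  · exact exists_closedTrail_of_forall_extend hE hext
  push Not at hext
  obtain ⟨m, hm, v, hmv, hleaf⟩ := hext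
  have hvV : v ∈ V₀ := by rcases hmv with h | h <;> simp [← h, hEV m hm]
  have htwo : 1 < #V₀ := one_lt_card.mpr ⟨i m, (hEV m hm).1, j m, (hEV m hm).2, hij m⟩
  have hEV' : ∀ m' ∈ E.erase m, i m' ∈ V₀.erase v ∧ j m' ∈ V₀.erase v := by
    intro m' hm'
    obtain ⟨hne, hm'E⟩ := mem_erase.mp hm'
    have := hleaf m' hm'E hne
    exact ⟨mem_erase.mpr ⟨by tauto, (hEV m' hm'E).1⟩, mem_erase.mpr ⟨by tauto, (hEV m' hm'E).2⟩⟩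
  have hcard' : #(V₀.erase v) ≤ #(E.erase m) := by
    rw [card_erase_of_mem hvV, card_erase_of_mem hm]
    omega
  have hE' : (E.erase m).Nonempty := by
    rw [← card_pos, card_erase_of_mem hm]
    omega
  obtain ⟨c, hc⟩ := ih (V₀.erase v) (erase_ssubset hvV) (E.erase m) hEV' hcard' hE'
  exact ⟨c, fun t ht => mem_of_mem_erase (hc t ht)⟩

end Trails

lemma prod_ite_inv_ne_one {ι κ G : Type*} [CommGroupWithZero G] {α : ι → G}
    (hα : ∀ m, α m ≠ 0) (hgen : Function.Injective fun t : Finset ι => ∏ m ∈ t, α m)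
    {S : Finset κ} (hS : S.Nonempty) {e : κ → ι} (he : Set.InjOn e S) (p : κ → Prop)
    [DecidablePred p] : ∏ t ∈ S, (if p t then α (e t) else (α (e t))⁻¹) ≠ 1 := by
  classical
  intro h
  rw [prod_ite, prod_inv_distrib, mul_inv_eq_one₀ (prod_ne_zero_iff.mpr fun _ _ => hα _),
    ← prod_image (he.mono (filter_subset _ _)), ← prod_image (he.mono (filter_subset _ _))] at h
  have himage := hgen h
  obtain ⟨t, ht⟩ := hS
  have hmem (q : κ → Prop) [DecidablePred q] (hq : q t) : e t ∈ (S.filter q).image e :=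
    mem_image_of_mem e (mem_filter.mpr ⟨ht, hq⟩)
  by_cases hpt : p t
  · obtain ⟨t', ht', hte⟩ := mem_image.mp (himage ▸ hmem p hpt)
    exact (mem_filter.mp ht').2 (he (filter_subset _ _ ht') ht hte ▸ hpt)
  · obtain ⟨t', ht', hte⟩ := mem_image.mp (himage ▸ hmem (¬p ·) hpt)
    exact hpt (he (filter_subset _ _ ht') ht hte ▸ (mem_filter.mp ht').2)

lemma exists_le_prod_mul_add (β γ : ℕ → ℝ) (hβ : ∀ t, 0 ≤ β t) (k : ℕ) :
    ∃ C, ∀ y : ℕ → ℝ, (∀ t < k, y (t + 1) ≤ β t * y t + γ t) →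
      y k ≤ (∏ t ∈ range k, β t) * y 0 + C := by
  induction k with
  | zero => exact ⟨0, fun y _ => by simp⟩
  | succ k ih =>
    obtain ⟨C, hC⟩ := ih
    refine ⟨β k * C + γ k, fun y hy => ?_⟩
    have hk := hC y fun t ht => hy t (by omega)
    calc y (k + 1) ≤ β k * y k + γ k := hy k (by omega)
      _ ≤ β k * ((∏ t ∈ range k, β t) * y 0 + C) + γ k := by gcongr; exact hβ k
      _ = (∏ t ∈ range (k + 1), β t) * y 0 + (β k * C + γ k) := by rw [prod_range_succ]; ring

lemma exists_le_of_prod_ne_one (β γ : ℕ → ℝ) (hβ : ∀ t, 0 ≤ β t) {k : ℕ}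
    (hB : ∏ t ∈ range k, β t ≠ 1) :
    ∃ d : Bool, ∃ L, ∀ y : ℕ → ℝ, y k = y 0 →
      (∀ t < k, if d then y (t + 1) ≤ β t * y t + γ t else β t * y t + γ t ≤ y (t + 1)) →
      L ≤ y 0 := by
  set B := ∏ t ∈ range k, β t
  rcases hB.lt_or_gt with hB | hB
  · obtain ⟨C, hC⟩ := exists_le_prod_mul_add β (-γ) hβ k
    refine ⟨false, -C / (1 - B), fun y hcyc hy => ?_⟩
    have hneg := hC (-y) fun t ht => by
      have hyt := hy t ht
      simp only [Bool.false_eq_true, ↓reduceIte] at hyt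
      simp only [Pi.neg_apply]
      linarith
    rw [div_le_iff₀ (by linarith)]
    simp only [Pi.neg_apply, hcyc] at hneg
    linarith
  · obtain ⟨C, hC⟩ := exists_le_prod_mul_add β γ hβ k
    refine ⟨true, C / (1 - B), fun y hcyc hy => ?_⟩
    have hpos := hC y fun t ht => by simpa using hy t ht
    rw [div_le_iff_of_neg (by linarith)]
    rw [hcyc] at hpos
    linarith

lemma log_fst_bound_of_cusp {a α p q : ℝ} (ha : 0 < a) (hp : 0 < p) (hq : 0 < q) (d : Bool)
    (h : if d then a * p < q ^ α else a * p > q ^ α) :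
    if d then log p ≤ α * log q + -log a else α * log q + -log a ≤ log p := by
  have hlog : log (a * p) = log a + log p := log_mul ha.ne' hp.ne'
  have hlog' : log (q ^ α) = α * log q := log_rpow hq α
  cases d
  · have := log_lt_log (rpow_pos_of_pos hq α) h
    simp only [Bool.false_eq_true, ↓reduceIte]
    linarith
  · have := log_lt_log (mul_pos ha hp) h
    simp only [↓reduceIte]
    linarith

lemma log_snd_bound_of_cusp {a α p q : ℝ} (ha : 0 < a) (hα : 0 < α) (hp : 0 < p) (hq : 0 < q)
    (d : Bool) (h : if !d then a * p < q ^ α else a * p > q ^ α) :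
    if d then log q ≤ α⁻¹ * log p + α⁻¹ * log a
    else α⁻¹ * log p + α⁻¹ * log a ≤ log q := by
  have hlog : log (a * p) = log a + log p := log_mul ha.ne' hp.ne'
  have hlog' : log (q ^ α) = α * log q := log_rpow hq α
  rw [← mul_add]
  cases d
  · have := log_lt_log (mul_pos ha hp) h
    simp only [Bool.false_eq_true, ↓reduceIte]
    rw [inv_mul_le_iff₀ hα]
    linarith
  · have := log_lt_log (rpow_pos_of_pos hq α) h
    simp only [↓reduceIte]
    rw [le_inv_mul_iff₀ hα]
    linarith

/-- Traversing edge `m` from `u` to its other endpoint `w`, the cusp boundary `a x_i = x_j ^ α`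
reads `log x_w = cuspSlope * log x_u + cuspOffset`. -/
noncomputable def cuspSlope {ι V : Type*} [DecidableEq V] (j : ι → V) (α : ι → ℝ) (m : ι)
    (u : V) : ℝ :=
  if j m = u then α m else (α m)⁻¹

noncomputable def cuspOffset {ι V : Type*} [DecidableEq V] (j : ι → V) (a α : ι → ℝ) (m : ι)
    (u : V) : ℝ :=
  if j m = u then -log (a m) else (α m)⁻¹ * log (a m)

lemma Joins.log_bound_of_cusp {ι V : Type*} [DecidableEq V] {i j : ι → V} {a α : ι → ℝ}
    {x : V → ℝ} {m : ι} {u w : V} (hm : Joins i j m u w) (ha : 0 < a m) (hα : 0 < α m)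
    (hx : ∀ p, 0 < x p)
    (d : Bool) (h : if (if j m = u then d else !d) then a m * x (i m) < x (j m) ^ α m
      else a m * x (i m) > x (j m) ^ α m) :
    if d then log (x w) ≤ cuspSlope j α m u * log (x u) + cuspOffset j a α m u
    else cuspSlope j α m u * log (x u) + cuspOffset j a α m u ≤ log (x w) := by
  unfold cuspSlope cuspOffset
  by_cases hj : j m = u
  · simp only [if_pos hj] at h ⊢
    have := log_fst_bound_of_cusp ha (hx _) (hx _) d h
    rwa [hj, hm.right_eq_of_left hj] at this
  · obtain ⟨hi, hj'⟩ := hm.eq_of_not_left hj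
    simp only [if_neg hj] at h ⊢
    have := log_snd_bound_of_cusp ha hα (hx _) (hx _) d h
    rwa [hi, hj'] at this

theorem ClosedTrail.exists_cusps_disjoint {ι V : Type*} {i j : ι → V}
    {a α : ι → ℝ} (ha : ∀ m, 0 < a m) (hα : ∀ m, 0 < α m)
    (hgen : Function.Injective fun t : Finset ι => ∏ m ∈ t, α m)
    (c : ClosedTrail i j) {E : Finset ι} (hcE : ∀ t < c.length, c.edge t ∈ E) :
    ∃ s : ι → Bool, ∃ δ > 0, ¬ ∃ x : V → ℝ, (∀ p, 0 < x p ∧ x p < δ) ∧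
      ∀ m ∈ E, (if s m then a m * x (i m) < x (j m) ^ α m
                else a m * x (i m) > x (j m) ^ α m) := by
  classical
  obtain ⟨k, v, e, hk, hjoin, hcyc, he⟩ := c
  simp only at hcE ⊢
  set β : ℕ → ℝ := fun t => cuspSlope j α (e t) (v t)
  set γ : ℕ → ℝ := fun t => cuspOffset j a α (e t) (v t)
  have hβ (t : ℕ) : 0 ≤ β t := by
    have := hα (e t)
    simp only [β, cuspSlope]
    split_ifs <;> positivity
  have hB : ∏ t ∈ range k, β t ≠ 1 :=
    prod_ite_inv_ne_one (fun m => (hα m).ne') hgen ⟨0, mem_range.mpr hk⟩ he _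
  obtain ⟨d, L, hL⟩ := exists_le_of_prod_ne_one β γ hβ hB
  -- the cusp of each trail edge is the one whose log-inequality points in direction `d`
  refine ⟨fun m => if ∃ t < k, e t = m ∧ j m = v t then d else !d, exp L, exp_pos L, ?_⟩
  rintro ⟨x, hx, hcusp⟩
  have hsign (t : ℕ) (ht : t < k) : (∃ t' < k, e t' = e t ∧ j (e t) = v t') ↔ j (e t) = v t := by
    refine ⟨?_, fun h => ⟨t, ht, rfl, h⟩⟩
    rintro ⟨t', ht', hee, hj⟩
    rwa [he (mem_range.mpr ht') (mem_range.mpr ht) hee] at hj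
  have hstep (t : ℕ) (ht : t < k) : if d then log (x (v (t + 1))) ≤ β t * log (x (v t)) + γ t
      else β t * log (x (v t)) + γ t ≤ log (x (v (t + 1))) := by
    have h := hcusp (e t) (hcE t ht)
    simp only [hsign t ht] at h
    exact (hjoin t ht).log_bound_of_cusp (ha _) (hα _) (fun p => (hx p).1) d h
  have hlow := hL (fun t => log (x (v t))) (by simp only [hcyc]) hstep
  have hup : log (x (v 0)) < L := (log_lt_iff_lt_exp (hx _).1).mpr (hx _).2
  exact hlow.not_gt hup

theorem stmt_19 (N : ℕ) (hN : 2 ≤ N)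
    (i j : Fin (2 * N) → Fin N) (hij : ∀ m, i m ≠ j m)
    (a α : Fin (2 * N) → ℝ) (ha : ∀ m, 0 < a m) (hα : ∀ m, 1 < α m)
    (hgen : Function.Injective (fun t : Finset (Fin (2 * N)) => ∏ m ∈ t, α m)) :
    ∀ T : Finset (Fin (2 * N)), T.card = N →
      ∃ (s : Fin (2 * N) → Bool), ∃ δ > 0, ¬ ∃ x : Fin N → ℝ,
        (∀ p, 0 < x p ∧ x p < δ) ∧
        ∀ m ∈ T, (if s m then a m * x (i m) < x (j m) ^ α m
                  else a m * x (i m) > x (j m) ^ α m) := by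
  intro T hT
  have hT₀ : T.Nonempty := by rw [← card_pos, hT]; omega
  obtain ⟨c, hcT⟩ := exists_closedTrail_of_card_le hij univ T
    (fun m _ => ⟨mem_univ _, mem_univ _⟩) (by simp [hT]) hT₀
  exact c.exists_cusps_disjoint ha (fun m => one_pos.trans (hα m)) hgen hcT
end
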